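/- Let G be a locally colored graph, let Ω be a maximal connected union of cusp-free cycles of G (an element of 𝕺), and let e be an edge with endpoints v and u such that v ∈ Ω, u ∉ Ω, and (v, c(e,v)) is not a cusp-point of G. Then for every vertex x in Ω and every color α, the relation (u, c(e,u)) ⇝ (x, α) does not hold. -/

import Mathlib

/-- A finite undirected multigraph without loops: each edge is incident to
exactly two distinct endpoints. -/
structure Multigraph (V : Type) (E : Type) where
  inc : E → V → Prop
  exists_two : ∀ e : E, ∃ a b : V, a ≠ b ∧ ∀ w : V, inc e w ↔ (w = a ∨ w = b)

namespace Multigraph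

variable {V E C : Type}

/-- A path (walk) in a multigraph: an alternating sequence of vertices and
edges such that the endpoints of the `i`-th edge are exactly the `i`-th and
`(i+1)`-th vertices. -/
structure Walk (G : Multigraph V E) where
  len : ℕ
  vert : Fin (len + 1) → V
  edge : Fin len → E
  incs : ∀ (i : ℕ) (h : i < len), ∀ w : V,
    G.inc (edge ⟨i, h⟩) w ↔ (w = vert ⟨i, by omega⟩ ∨ w = vert ⟨i + 1, by omega⟩)

variable {G : Multigraph V E}

namespace Walk

/-- The source (first vertex) of a path. -/
def src (p : G.Walk) : V := p.vert ⟨0, by omega⟩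

/-- The target (last vertex) of a path. -/
def tgt (p : G.Walk) : V := p.vert ⟨p.len, by omega⟩

def IsClosed (p : G.Walk) : Prop := p.src = p.tgt

def IsOpen (p : G.Walk) : Prop := p.src ≠ p.tgt

/-- A path is simple when its edges are pairwise distinct and its vertices are
pairwise distinct, except that its two endpoints may coincide. -/
def IsSimple (p : G.Walk) : Prop :=
  (∀ (i j : ℕ) (hi : i < p.len) (hj : j < p.len),
      p.edge ⟨i, hi⟩ = p.edge ⟨j, hj⟩ → i = j) ∧
  (∀ (i j : ℕ) (hi : i < p.len + 1) (hj : j < p.len + 1), i < j →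
      p.vert ⟨i, hi⟩ = p.vert ⟨j, hj⟩ → i = 0 ∧ j = p.len)

/-- A cycle is a non-empty simple closed path. -/
def IsCycle (p : G.Walk) : Prop := p.IsSimple ∧ p.IsClosed ∧ 0 < p.len

/-- `x` occurs as a vertex of `p`. -/
def MemV (p : G.Walk) (x : V) : Prop := ∃ (i : ℕ) (h : i < p.len + 1), p.vert ⟨i, h⟩ = x

/-- `e` occurs as an edge of `p`. -/
def MemE (p : G.Walk) (e : E) : Prop := ∃ (i : ℕ) (h : i < p.len), p.edge ⟨i, h⟩ = e

/-- With respect to a local coloring `c`, the path `p` has a cusp at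
vertex-position `j`, at vertex `u`, with color `α`: either an internal cusp
(two consecutive distinct edges with the same color at their middle vertex),
or -- when `j = 0` and `p` is closed -- the cusp formed by its last edge, its
source and its first edge. -/
def CuspAt (c : E → V → C) (p : G.Walk) (j : ℕ) (u : V) (α : C) : Prop :=
  (∃ (h1 : 0 < j) (h2 : j < p.len),
      p.vert ⟨j, by omega⟩ = u ∧
      p.edge ⟨j - 1, by omega⟩ ≠ p.edge ⟨j, h2⟩ ∧
      c (p.edge ⟨j - 1, by omega⟩) u = α ∧ c (p.edge ⟨j, h2⟩) u = α) ∨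
  (j = 0 ∧ p.IsClosed ∧ p.src = u ∧
    ∃ h : 0 < p.len,
      p.edge ⟨p.len - 1, by omega⟩ ≠ p.edge ⟨0, h⟩ ∧
      c (p.edge ⟨p.len - 1, by omega⟩) u = α ∧ c (p.edge ⟨0, h⟩) u = α)

/-- `p` has a cusp at vertex-position `j`. -/
def CuspIdx (c : E → V → C) (p : G.Walk) (j : ℕ) : Prop := ∃ u α, p.CuspAt c j u α

/-- `p` has a cusp whose vertex is `u`. -/
def HasCuspAtV (c : E → V → C) (p : G.Walk) (u : V) : Prop := ∃ j α, p.CuspAt c j u α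

/-- A cusp-free (alternating) path. -/
def CuspFree (c : E → V → C) (p : G.Walk) : Prop := ∀ j : ℕ, ¬ p.CuspIdx c j

/-- The number of cusps of a path. -/
noncomputable def cuspCount (c : E → V → C) (p : G.Walk) : ℕ :=
  {j : ℕ | p.CuspIdx c j}.ncard

/-- The starting color of `p` is not `α`. -/
def StartColorNe (c : E → V → C) (p : G.Walk) (α : C) : Prop :=
  ∀ h : 0 < p.len, c (p.edge ⟨0, h⟩) p.src ≠ α

/-- `p` is non-empty and its ending color is `β`. -/
def EndColorIs (c : E → V → C) (p : G.Walk) (β : C) : Prop :=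
  ∃ h : 0 < p.len, c (p.edge ⟨p.len - 1, by omega⟩) p.tgt = β

/-- `q` is a (contiguous) sub-path of `p`. -/
def IsSubpathOf (q p : G.Walk) : Prop :=
  ∃ (k : ℕ) (hk : k + q.len ≤ p.len),
    (∀ (i : ℕ) (hi : i < q.len + 1), q.vert ⟨i, hi⟩ = p.vert ⟨k + i, by omega⟩) ∧
    (∀ (i : ℕ) (hi : i < q.len), q.edge ⟨i, hi⟩ = p.edge ⟨k + i, by omega⟩)

/-- `r` is the path `p` extended (at its end) by the edge `e` to the vertex `l`;
that is, `r = p · (tgt p, e, l)`. -/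
def ExtendsBy (r p : G.Walk) (e : E) (l : V) : Prop :=
  ∃ hlen : r.len = p.len + 1,
    (∀ (i : ℕ) (hi : i < p.len + 1), r.vert ⟨i, by omega⟩ = p.vert ⟨i, hi⟩) ∧
    (∀ (i : ℕ) (hi : i < p.len), r.edge ⟨i, by omega⟩ = p.edge ⟨i, hi⟩) ∧
    r.edge ⟨p.len, by omega⟩ = e ∧ r.vert ⟨p.len + 1, by omega⟩ = l

/-- `r` is the path obtained by prefixing `p` with the edge `e`;
that is, `r = (src r, e, src p) · p`. -/
def ConsOf (r : G.Walk) (e : E) (p : G.Walk) : Prop :=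
  ∃ hlen : r.len = p.len + 1,
    r.edge ⟨0, by omega⟩ = e ∧
    (∀ (i : ℕ) (hi : i < p.len + 1), r.vert ⟨i + 1, by omega⟩ = p.vert ⟨i, hi⟩) ∧
    (∀ (i : ℕ) (hi : i < p.len), r.edge ⟨i + 1, by omega⟩ = p.edge ⟨i, hi⟩)

end Walk

/-- `(v, α)` is a cusp-point: two distinct edges incident to `v` both have
color `α` at `v`. -/
def IsCuspPoint (G : Multigraph V E) (c : E → V → C) (v : V) (α : C) : Prop :=
  ∃ e f : E, e ≠ f ∧ G.inc e v ∧ G.inc f v ∧ c e v = α ∧ c f v = α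

/-- `(v, α) ⇝_p (u, β)`: `p` is a simple open cusp-free path from `v` to `u`
whose starting color is not `α` and whose ending color is `β`. -/
def StepsTo (G : Multigraph V E) (c : E → V → C) (v : V) (α : C) (u : V) (β : C)
    (p : G.Walk) : Prop :=
  p.IsSimple ∧ p.IsOpen ∧ p.CuspFree c ∧ p.src = v ∧ p.tgt = u ∧
    p.StartColorNe c α ∧ p.EndColorIs c β

/-- `(v, α) ⇝ (u, β)`. -/
def Steps (G : Multigraph V E) (c : E → V → C) (v : V) (α : C) (u : V) (β : C) : Prop :=
  ∃ p : G.Walk, G.StepsTo c v α u β p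

/-- `(v, α) ⊳_p (u, β)`: `(v, α) ⇝_p (u, β)` and no `⇝`-path from `(u, β)`
ends on a vertex of `p`. -/
def TriPath (G : Multigraph V E) (c : E → V → C) (v : V) (α : C) (u : V) (β : C)
    (p : G.Walk) : Prop :=
  G.StepsTo c v α u β p ∧
    ∀ (x : V) (τ : C) (q : G.Walk), G.StepsTo c u β x τ q → ¬ p.MemV x

/-- `(v, α) ⊳ (u, β)`. -/
def Tri (G : Multigraph V E) (c : E → V → C) (v : V) (α : C) (u : V) (β : C) : Prop :=
  ∃ p : G.Walk, G.TriPath c v α u β p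

/-- A splitting vertex: every cycle containing `v` has a cusp at `v`. -/
def IsSplitting (G : Multigraph V E) (c : E → V → C) (v : V) : Prop :=
  ∀ ω : G.Walk, ω.IsCycle → ω.MemV v → ω.HasCuspAtV c v

/-- A set `P` of vertex-color pairs dominates cusp-points. -/
def Dominates (G : Multigraph V E) (c : E → V → C) (P : Set (V × C)) : Prop :=
  ∀ (v : V) (α : C), G.IsCuspPoint c v α →
    (v, α) ∈ P ∨ ∃ (u : V) (β : C), (u, β) ∈ P ∧ G.Tri c v α u β

/-- `𝔐(v)`: the set of cycles with source `v`, whose last and first edges do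
not make a cusp at `v`, with a minimal number of cusps among such cycles. -/
def MinCycles (G : Multigraph V E) (c : E → V → C) (v : V) : Set G.Walk :=
  {ω | ω.IsCycle ∧ ω.src = v ∧ ¬ ω.CuspIdx c 0 ∧
    ∀ ω' : G.Walk, ω'.IsCycle → ω'.src = v → ¬ ω'.CuspIdx c 0 →
      ω.cuspCount c ≤ ω'.cuspCount c}

/-- The one-edge path `(v, e, u)`. -/
def singleWalk (G : Multigraph V E) (e : E) (v u : V)
    (hends : ∀ w : V, G.inc e w ↔ w = v ∨ w = u) : G.Walk where
  len := 1
  vert := fun i => if (i : ℕ) = 0 then v else u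
  edge := fun _ => e
  incs := by
    intro i h w
    have hi : i = 0 := by omega
    subst hi
    simpa using hends w

/-- An alternating cycle with respect to an edge-coloring: a cycle whose
consecutive edges (including last and first) have different colors. -/
def Walk.IsAlternatingCycle (c : E → C) (p : G.Walk) : Prop :=
  p.IsCycle ∧
  (∀ (i : ℕ) (h : i + 1 < p.len), c (p.edge ⟨i, by omega⟩) ≠ c (p.edge ⟨i + 1, h⟩)) ∧
  (∀ h : 0 < p.len, c (p.edge ⟨p.len - 1, by omega⟩) ≠ c (p.edge ⟨0, h⟩))

/-- `a` and `b` are connected in `G − v` (by a path avoiding `v`). -/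
def ReachAvoiding (G : Multigraph V E) (v a b : V) : Prop :=
  ∃ p : G.Walk, p.src = a ∧ p.tgt = b ∧
    ∀ (i : ℕ) (h : i < p.len + 1), p.vert ⟨i, h⟩ ≠ v

/-- A perfect matching: every vertex is incident to exactly one edge of `F`. -/
def IsPerfectMatching (G : Multigraph V E) (F : Set E) : Prop :=
  ∀ v : V, ∃! e : E, e ∈ F ∧ G.inc e v

/-- A bridge: an edge contained in no cycle. -/
def IsBridge (G : Multigraph V E) (e : E) : Prop :=
  ¬ ∃ ω : G.Walk, ω.IsCycle ∧ ω.MemE e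

/-- A `φ`-conformal cycle: a cycle `ω` such that `φ x` is an edge of `ω`
for every vertex `x` of `ω`. -/
def ConformalCycle (G : Multigraph V E) (φ : V → E) (ω : G.Walk) : Prop :=
  ω.IsCycle ∧ ∀ x : V, ω.MemV x → ω.MemE (φ x)

/-- A sub-graph: sets of vertices and edges, each edge having its endpoints
among the vertices. -/
structure Subgraph (G : Multigraph V E) where
  verts : Set V
  edges : Set E
  edge_mem : ∀ e ∈ edges, ∀ w : V, G.inc e w → w ∈ verts

/-- The walk `p` lies inside the sub-graph `S`. -/
def Walk.InSub (p : G.Walk) (S : G.Subgraph) : Prop :=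
  (∀ (i : ℕ) (h : i < p.len + 1), p.vert ⟨i, h⟩ ∈ S.verts) ∧
  (∀ (i : ℕ) (h : i < p.len), p.edge ⟨i, h⟩ ∈ S.edges)

/-- `S` is `⇝`-connected: any two distinct vertices of `S` are related by `⇝`
along a path inside `S`, for any starting color constraint. -/
def Subgraph.StepConnected (c : E → V → C) (S : G.Subgraph) : Prop :=
  ∀ v ∈ S.verts, ∀ u ∈ S.verts, v ≠ u → ∀ α : C,
    ∃ (p : G.Walk) (β : C), p.InSub S ∧ G.StepsTo c v α u β p

/-- `S` is connected: non-empty, and any two of its vertices are joined by a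
path lying inside it. -/
def Subgraph.IsConnected (S : G.Subgraph) : Prop :=
  (S.verts.Nonempty ∨ S.edges.Nonempty) ∧
  ∀ a ∈ S.verts, ∀ b ∈ S.verts,
    ∃ p : G.Walk, p.InSub S ∧ p.src = a ∧ p.tgt = b

/-- The sub-graph consisting of the vertices and edges of a walk. -/
def Walk.toSub (p : G.Walk) : G.Subgraph where
  verts := {x | p.MemV x}
  edges := {e | p.MemE e}
  edge_mem := by
    rintro e ⟨i, h, rfl⟩ w hw
    rw [p.incs i h w] at hw
    rcases hw with h' | h'
    · exact ⟨i, by omega, h'.symm⟩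
    · exact ⟨i + 1, by omega, h'.symm⟩

/-- Union of sub-graphs. -/
def Subgraph.union (S R : G.Subgraph) : G.Subgraph where
  verts := S.verts ∪ R.verts
  edges := S.edges ∪ R.edges
  edge_mem := by
    rintro e (he | he) w hw
    · exact Or.inl (S.edge_mem e he w hw)
    · exact Or.inr (R.edge_mem e he w hw)

/-- Inclusion of sub-graphs. -/
def Subgraph.le (S T : G.Subgraph) : Prop := S.verts ⊆ T.verts ∧ S.edges ⊆ T.edges

/-- `S` is a union of cusp-free cycles. -/
def IsCuspFreeCycleUnion (G : Multigraph V E) (c : E → V → C) (S : G.Subgraph) : Prop :=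
  ∃ F : Set G.Walk, (∀ ω ∈ F, Walk.IsCycle ω ∧ Walk.CuspFree c ω) ∧
    S.verts = {x | ∃ ω ∈ F, Walk.MemV ω x} ∧
    S.edges = {e | ∃ ω ∈ F, Walk.MemE ω e}

/-- `𝕺`: the set of maximal connected unions of cusp-free cycles. -/
def MaxCFCU (G : Multigraph V E) (c : E → V → C) : Set (G.Subgraph) :=
  {S | G.IsCuspFreeCycleUnion c S ∧ S.IsConnected ∧
    ∀ T : G.Subgraph, G.IsCuspFreeCycleUnion c T → T.IsConnected → S.le T → T.le S}

end Multigraph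

/-- A finite directed loopless multigraph. -/
structure DirMultigraph (V : Type) (E : Type) where
  srcE : E → V
  tgtE : E → V
  ne : ∀ e : E, srcE e ≠ tgtE e

/-- The underlying undirected multigraph of a directed multigraph. -/
def DirMultigraph.toMultigraph {V E : Type} (D : DirMultigraph V E) : Multigraph V E where
  inc e w := w = D.srcE e ∨ w = D.tgtE e
  exists_two e := ⟨D.srcE e, D.tgtE e, D.ne e, fun _ => Iff.rfl⟩

/-- `v` is a turning vertex of the cycle `ω`: the two edges incident to `v`
in `ω` either both have source `v` or both have target `v`. -/
def DirMultigraph.TurningAt {V E : Type} (D : DirMultigraph V E)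
    (ω : D.toMultigraph.Walk) (v : V) : Prop :=
  (∃ (j : ℕ) (h1 : 0 < j) (h2 : j < ω.len),
      ω.vert ⟨j, by omega⟩ = v ∧
      ((D.srcE (ω.edge ⟨j - 1, by omega⟩) = v ∧ D.srcE (ω.edge ⟨j, h2⟩) = v) ∨
       (D.tgtE (ω.edge ⟨j - 1, by omega⟩) = v ∧ D.tgtE (ω.edge ⟨j, h2⟩) = v))) ∨
  (Multigraph.Walk.IsClosed ω ∧ Multigraph.Walk.src ω = v ∧
    ∃ h : 0 < ω.len,
      ((D.srcE (ω.edge ⟨ω.len - 1, by omega⟩) = v ∧ D.srcE (ω.edge ⟨0, h⟩) = v) ∨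
       (D.tgtE (ω.edge ⟨ω.len - 1, by omega⟩) = v ∧ D.tgtE (ω.edge ⟨0, h⟩) = v)))


section Aux
namespace Multigraph
namespace Walk

variable {V E C : Type} {G : Multigraph V E}

theorem vert_congr (p : G.Walk) {i j : ℕ} (hij : i = j) (hi : i < p.len + 1)
    (hj : j < p.len + 1) : p.vert ⟨i, hi⟩ = p.vert ⟨j, hj⟩ := by subst hij; rfl

theorem edge_congr (p : G.Walk) {i j : ℕ} (hij : i = j) (hi : i < p.len)
    (hj : j < p.len) : p.edge ⟨i, hi⟩ = p.edge ⟨j, hj⟩ := by subst hij; rfl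

theorem vert_succ_ne (p : G.Walk) (i : ℕ) (h : i < p.len) :
    p.vert ⟨i, by omega⟩ ≠ p.vert ⟨i + 1, by omega⟩ := by
  obtain ⟨a, b, hab, hinc⟩ := G.exists_two (p.edge ⟨i, h⟩)
  intro heq
  have h1 : p.vert ⟨i, by omega⟩ = a ∨ p.vert ⟨i, by omega⟩ = b :=
    (hinc _).1 ((p.incs i h _).2 (Or.inl rfl))
  have h2 : p.vert ⟨i + 1, by omega⟩ = a ∨ p.vert ⟨i + 1, by omega⟩ = b :=
    (hinc _).1 ((p.incs i h _).2 (Or.inr rfl))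
  have ha : G.inc (p.edge ⟨i, h⟩) a := (hinc a).2 (Or.inl rfl)
  have hb : G.inc (p.edge ⟨i, h⟩) b := (hinc b).2 (Or.inr rfl)
  rw [p.incs i h a] at ha
  rw [p.incs i h b] at hb
  apply hab
  rcases ha with ha | ha <;> rcases hb with hb | hb <;> rw [ha, hb] <;>
    first | rfl | exact heq | exact heq.symm

/-- The two endpoints of the `i`-th edge are the `i`-th and `(i+1)`-th vertices;
so any vertex incident to that edge is one of them. -/
theorem inc_edge_iff (p : G.Walk) (i : ℕ) (h : i < p.len) (w : V) :
    G.inc (p.edge ⟨i, h⟩) w ↔ (w = p.vert ⟨i, by omega⟩ ∨ w = p.vert ⟨i + 1, by omega⟩) :=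
  p.incs i h w

theorem IsCycle.two_le_len {p : G.Walk} (hp : p.IsCycle) : 2 ≤ p.len := by
  rcases hp with ⟨_, hcl, hpos⟩
  by_contra h
  have h1 : p.len = 1 := by omega
  have := p.vert_succ_ne 0 (by omega)
  apply this
  have := hcl
  unfold IsClosed src tgt at this
  rw [this]
  exact p.vert_congr (by omega) _ _

/-- No-cusp condition on a pair of edges meeting at `z`. -/
def NoCusp3 (c : E → V → C) (f g : E) (z : V) : Prop := f = g ∨ c f z ≠ c g z

theorem NoCusp3.symm {c : E → V → C} {f g : E} {z : V} (h : NoCusp3 c f g z) :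
    NoCusp3 c g f z := by
  rcases h with h | h
  · exact Or.inl h.symm
  · exact Or.inr h.symm

theorem cuspFree_of {c : E → V → C} (p : G.Walk)
    (hint : ∀ (i : ℕ) (h : i + 1 < p.len),
      NoCusp3 c (p.edge ⟨i, by omega⟩) (p.edge ⟨i + 1, h⟩) (p.vert ⟨i + 1, by omega⟩))
    (hwrap : p.IsClosed → ∀ h : 0 < p.len,
      NoCusp3 c (p.edge ⟨p.len - 1, by omega⟩) (p.edge ⟨0, h⟩) p.src) :
    p.CuspFree c := by
  intro j ⟨z, α, hc⟩
  rcases hc with ⟨h1, h2, hz, hne, ha, hb⟩ | ⟨hj0, hcl, hz, h, hne, ha, hb⟩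
  · rcases hint (j - 1) (by omega) with heq | hcol
    · exact hne (by rw [heq]; exact p.edge_congr (by omega) _ _)
    · exact hcol (by
        rw [p.vert_congr (show j - 1 + 1 = j by omega) (by omega) (by omega), hz, ha,
          p.edge_congr (show j - 1 + 1 = j by omega) (by omega) h2, hb])
  · rcases hwrap hcl h with heq | hcol
    · exact hne heq
    · subst hj0
      rw [hz] at hcol
      rw [ha, hb] at hcol
      exact hcol rfl

theorem CuspFree.int {c : E → V → C} {p : G.Walk} (hcf : p.CuspFree c) (i : ℕ)
    (h : i + 1 < p.len) :
    NoCusp3 c (p.edge ⟨i, by omega⟩) (p.edge ⟨i + 1, h⟩) (p.vert ⟨i + 1, by omega⟩) := by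
  by_contra hn
  apply hcf (i + 1)
  refine ⟨p.vert ⟨i + 1, by omega⟩, c (p.edge ⟨i, by omega⟩) (p.vert ⟨i + 1, by omega⟩),
    Or.inl ⟨by omega, h, p.vert_congr (by omega) _ _, ?_, ?_, ?_⟩⟩
  · intro heq
    exact hn (Or.inl (by rw [← heq]; exact p.edge_congr (by omega) _ _))
  · rfl
  · by_contra hcc
    exact hn (Or.inr fun hcol => hcc hcol.symm)

theorem CuspFree.wrap {c : E → V → C} {p : G.Walk} (hcf : p.CuspFree c)
    (hcl : p.IsClosed) (h : 0 < p.len) :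
    NoCusp3 c (p.edge ⟨p.len - 1, by omega⟩) (p.edge ⟨0, h⟩) p.src := by
  by_contra hn
  apply hcf 0
  exact ⟨p.src, c (p.edge ⟨0, h⟩) p.src,
    Or.inr ⟨rfl, hcl, rfl, h, fun heq => hn (Or.inl heq),
      by_contra fun hc => hn (Or.inr fun hcc => hc (by rw [hcc])), rfl⟩⟩

theorem incs_gen (p : G.Walk) (i : ℕ) (hi : i < p.len) {j k : ℕ} (hj : j = i)
    (hk : k = i + 1) (hj' : j < p.len + 1) (hk' : k < p.len + 1) (w : V) :
    G.inc (p.edge ⟨i, hi⟩) w ↔ (w = p.vert ⟨j, hj'⟩ ∨ w = p.vert ⟨k, hk'⟩) := by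
  subst hj; subst hk; exact p.incs _ hi w

/-- The sub-walk of `p` from position `a` to position `b`. -/
def segment (p : G.Walk) (a b : ℕ) (hab : a ≤ b) (hb : b ≤ p.len) : G.Walk where
  len := b - a
  vert i := p.vert ⟨a + i, by have := i.isLt; omega⟩
  edge i := p.edge ⟨a + i, by have := i.isLt; omega⟩
  incs := by
    intro i h w
    exact p.incs_gen (a + i) (by omega) rfl rfl (by omega) (by omega) w

theorem segment_len (p : G.Walk) (a b : ℕ) (hab : a ≤ b) (hb : b ≤ p.len) :
    (p.segment a b hab hb).len = b - a := rfl

theorem segment_vert (p : G.Walk) (a b : ℕ) (hab : a ≤ b) (hb : b ≤ p.len)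
    (i : ℕ) (hi : i < b - a + 1) :
    (p.segment a b hab hb).vert ⟨i, hi⟩ = p.vert ⟨a + i, by omega⟩ := rfl

theorem segment_edge (p : G.Walk) (a b : ℕ) (hab : a ≤ b) (hb : b ≤ p.len)
    (i : ℕ) (hi : i < b - a) :
    (p.segment a b hab hb).edge ⟨i, hi⟩ = p.edge ⟨a + i, by omega⟩ := rfl

theorem segment_src (p : G.Walk) (a b : ℕ) (hab : a ≤ b) (hb : b ≤ p.len) :
    (p.segment a b hab hb).src = p.vert ⟨a, by omega⟩ := rfl

theorem segment_tgt (p : G.Walk) (a b : ℕ) (hab : a ≤ b) (hb : b ≤ p.len) :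
    (p.segment a b hab hb).tgt = p.vert ⟨b, by omega⟩ := by
  show p.vert ⟨a + (b - a), by omega⟩ = _
  exact p.vert_congr (by omega) _ _

/-- Concatenation of two walks. -/
def append (p q : G.Walk) (hpq : p.tgt = q.src) : G.Walk where
  len := p.len + q.len
  vert i := if h : (i : ℕ) < p.len + 1 then p.vert ⟨i, h⟩
    else q.vert ⟨(i : ℕ) - p.len, by have := i.isLt; omega⟩
  edge i := if h : (i : ℕ) < p.len then p.edge ⟨i, h⟩
    else q.edge ⟨(i : ℕ) - p.len, by have := i.isLt; omega⟩
  incs := by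
    intro i h w
    dsimp only
    by_cases hi : i < p.len
    · rw [dif_pos hi, dif_pos (show i < p.len + 1 by omega),
        dif_pos (show (i + 1 : ℕ) < p.len + 1 by omega)]
      exact p.incs i hi w
    · rw [dif_neg hi, dif_neg (show ¬((i + 1 : ℕ) < p.len + 1) by omega)]
      by_cases hi2 : (i : ℕ) < p.len + 1
      · rw [dif_pos hi2]
        have h0 : p.vert ⟨i, hi2⟩ = q.vert ⟨i - p.len, by omega⟩ := by
          have h1 : p.vert ⟨i, hi2⟩ = p.tgt := p.vert_congr (by omega) _ _
          have h2 : q.src = q.vert ⟨i - p.len, by omega⟩ := q.vert_congr (by omega) _ _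
          rw [h1, hpq, h2]
        rw [h0]
        exact q.incs_gen (i - p.len) (by omega) rfl (by omega) (by omega) (by omega) w
      · rw [dif_neg hi2]
        exact q.incs_gen (i - p.len) (by omega) rfl (by omega) (by omega) (by omega) w

theorem append_len (p q : G.Walk) (hpq : p.tgt = q.src) :
    (p.append q hpq).len = p.len + q.len := rfl

theorem append_vert_le (p q : G.Walk) (hpq : p.tgt = q.src) (i : ℕ) (hi : i ≤ p.len) :
    (p.append q hpq).vert ⟨i, by rw [append_len]; omega⟩ = p.vert ⟨i, by omega⟩ := by
  show dite (i < p.len + 1) _ _ = _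
  split
  · exact p.vert_congr rfl _ _
  · omega

theorem append_vert_ge (p q : G.Walk) (hpq : p.tgt = q.src) (i : ℕ) (hi : p.len ≤ i)
    (hi' : i < p.len + q.len + 1) :
    (p.append q hpq).vert ⟨i, by rw [append_len]; omega⟩ = q.vert ⟨i - p.len, by omega⟩ := by
  show dite (i < p.len + 1) _ _ = _
  split
  · next h =>
      exact (p.vert_congr (show i = p.len by omega) h (by omega)).trans
        (hpq.trans (q.vert_congr (show (0 : ℕ) = i - p.len by omega) (by omega) (by omega)))
  · exact q.vert_congr rfl _ _

theorem append_edge_lt (p q : G.Walk) (hpq : p.tgt = q.src) (i : ℕ) (hi : i < p.len) :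
    (p.append q hpq).edge ⟨i, by rw [append_len]; omega⟩ = p.edge ⟨i, hi⟩ := by
  show dite (i < p.len) _ _ = _
  split
  · exact p.edge_congr rfl _ _
  · omega

theorem append_edge_ge (p q : G.Walk) (hpq : p.tgt = q.src) (i : ℕ) (hi : p.len ≤ i)
    (hi' : i < p.len + q.len) :
    (p.append q hpq).edge ⟨i, by rw [append_len]; omega⟩ = q.edge ⟨i - p.len, by omega⟩ := by
  show dite (i < p.len) _ _ = _
  split
  · omega
  · exact q.edge_congr rfl _ _

theorem append_src (p q : G.Walk) (hpq : p.tgt = q.src) :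
    (p.append q hpq).src = p.src := by
  exact append_vert_le p q hpq 0 (by omega)

theorem append_tgt (p q : G.Walk) (hpq : p.tgt = q.src) :
    (p.append q hpq).tgt = q.tgt := by
  have h2 : (p.append q hpq).tgt
      = (p.append q hpq).vert ⟨p.len + q.len, by rw [append_len]; omega⟩ :=
    (p.append q hpq).vert_congr (append_len p q hpq) (by omega) (by rw [append_len]; omega)
  exact h2.trans ((append_vert_ge p q hpq (p.len + q.len) (by omega) (by omega)).trans
    (q.vert_congr (by omega) (by omega) (by omega)))

/-- Reversal of a walk. -/
def reverse (p : G.Walk) : G.Walk where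
  len := p.len
  vert i := p.vert ⟨p.len - i, by have := i.isLt; omega⟩
  edge i := p.edge ⟨p.len - 1 - i, by have := i.isLt; omega⟩
  incs := by
    intro i h w
    dsimp only
    exact Iff.trans
      (p.incs_gen (p.len - 1 - i) (by omega) (by omega) (by omega) (by omega) (by omega) w)
      or_comm

theorem reverse_len (p : G.Walk) : p.reverse.len = p.len := rfl

theorem reverse_vert (p : G.Walk) (i : ℕ) (hi : i < p.len + 1) :
    p.reverse.vert ⟨i, hi⟩ = p.vert ⟨p.len - i, by omega⟩ := rfl

theorem reverse_edge (p : G.Walk) (i : ℕ) (hi : i < p.len) :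
    p.reverse.edge ⟨i, hi⟩ = p.edge ⟨p.len - 1 - i, by omega⟩ := rfl

theorem reverse_src (p : G.Walk) : p.reverse.src = p.tgt := rfl

theorem reverse_tgt (p : G.Walk) : p.reverse.tgt = p.src := by
  have h2 : p.reverse.tgt = p.reverse.vert ⟨p.len, by rw [reverse_len]; omega⟩ :=
    p.reverse.vert_congr (reverse_len p) (by omega) (by rw [reverse_len]; omega)
  exact h2.trans ((reverse_vert p p.len (by omega)).trans (p.vert_congr (by omega) (by omega) (by omega)))

theorem noCusp3_transfer {c : E → V → C} {f g f' g' : E} {z z' : V}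
    (h : NoCusp3 c f g z) (hf : f' = f) (hg : g' = g) (hz : z' = z) :
    NoCusp3 c f' g' z' := by subst hf; subst hg; subst hz; exact h

theorem segment_isSimple {p : G.Walk} (hp : p.IsSimple) (a b : ℕ) (hab : a ≤ b)
    (hb : b ≤ p.len) : (p.segment a b hab hb).IsSimple := by
  have hlen : (p.segment a b hab hb).len = b - a := rfl
  constructor
  · intro i j hi hj heq
    have := hp.1 (a + i) (a + j) (by omega) (by omega) heq
    omega
  · intro i j hi hj hij heq
    have := hp.2 (a + i) (a + j) (by omega) (by omega) (by omega) heq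
    omega

theorem segment_cuspFree {c : E → V → C} {p : G.Walk} (hs : p.IsSimple)
    (hcf : p.CuspFree c) (a b : ℕ) (hab : a ≤ b) (hb : b ≤ p.len) :
    (p.segment a b hab hb).CuspFree c := by
  have hlen : (p.segment a b hab hb).len = b - a := rfl
  apply cuspFree_of
  · intro i h
    exact hcf.int (a + i) (by omega)
  · intro hcl h
    have hcl' : p.vert ⟨a, by omega⟩ = p.vert ⟨b, by omega⟩ :=
      (segment_src p a b hab hb).symm.trans (hcl.trans (segment_tgt p a b hab hb))
    by_cases hba : a = b
    · omega
    · have hab' : a = 0 ∧ b = p.len := hs.2 a b (by omega) (by omega) (by omega) hcl'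
      have hclosed : p.IsClosed := by
        show p.vert ⟨0, by omega⟩ = p.vert ⟨p.len, by omega⟩
        exact (p.vert_congr hab'.1.symm (by omega) (by omega)).trans
          (hcl'.trans (p.vert_congr hab'.2 (by omega) (by omega)))
      refine noCusp3_transfer (hcf.wrap hclosed (by omega)) ?_ ?_ ?_
      · exact (segment_edge p a b hab hb _ _).trans (p.edge_congr (by omega) (by omega) (by omega))
      · exact (segment_edge p a b hab hb _ _).trans (p.edge_congr (by omega) (by omega) (by omega))
      · exact (segment_src p a b hab hb).trans (p.vert_congr hab'.1 (by omega) (by omega))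

theorem reverse_isSimple {p : G.Walk} (hp : p.IsSimple) : p.reverse.IsSimple := by
  have hlen : p.reverse.len = p.len := rfl
  constructor
  · intro i j hi hj heq
    have := hp.1 (p.len - 1 - i) (p.len - 1 - j) (by omega) (by omega) heq
    omega
  · intro i j hi hj hij heq
    have := hp.2 (p.len - j) (p.len - i) (by omega) (by omega) (by omega) heq.symm
    omega

theorem reverse_cuspFree {c : E → V → C} {p : G.Walk} (hcf : p.CuspFree c) :
    p.reverse.CuspFree c := by
  have hlen : p.reverse.len = p.len := rfl
  apply cuspFree_of
  · intro i h
    refine noCusp3_transfer (NoCusp3.symm (hcf.int (p.len - 2 - i) (by omega))) ?_ ?_ ?_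
    · exact (reverse_edge p i (by omega)).trans (p.edge_congr (by omega) (by omega) (by omega))
    · exact (reverse_edge p (i + 1) (by omega)).trans (p.edge_congr (by omega) (by omega) (by omega))
    · exact (reverse_vert p (i + 1) (by omega)).trans (p.vert_congr (by omega) (by omega) (by omega))
  · intro hcl h
    have hcl' : p.IsClosed :=
      ((reverse_src p).symm.trans (hcl.trans (reverse_tgt p))).symm
    refine noCusp3_transfer (NoCusp3.symm (hcf.wrap hcl' (by omega))) ?_ ?_ ?_
    · exact (reverse_edge p (p.reverse.len - 1) (by omega)).trans
        (p.edge_congr (by omega) (by omega) (by omega))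
    · exact (reverse_edge p 0 (by omega)).trans (p.edge_congr (by omega) (by omega) (by omega))
    · exact (reverse_src p).trans hcl'.symm

theorem append_isSimple {p q : G.Walk} (hpq : p.tgt = q.src) (hp : p.IsSimple)
    (hq : q.IsSimple) (hpo : p.IsOpen) (hqo : q.IsOpen)
    (hvert : ∀ (i j : ℕ) (hi : i < p.len + 1) (hj : j < q.len + 1),
      p.vert ⟨i, hi⟩ = q.vert ⟨j, hj⟩ → (i = p.len ∧ j = 0) ∨ (i = 0 ∧ j = q.len))
    (hedge : ∀ (i j : ℕ) (hi : i < p.len) (hj : j < q.len), p.edge ⟨i, hi⟩ ≠ q.edge ⟨j, hj⟩) :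
    (p.append q hpq).IsSimple := by
  have hlen : (p.append q hpq).len = p.len + q.len := rfl
  constructor
  · intro i j hi hj heq
    by_cases h1 : i < p.len <;> by_cases h2 : j < p.len
    · exact hp.1 i j h1 h2 ((append_edge_lt p q hpq i h1).symm.trans
        (heq.trans (append_edge_lt p q hpq j h2)))
    · exact absurd ((append_edge_lt p q hpq i h1).symm.trans
        (heq.trans (append_edge_ge p q hpq j (by omega) (by omega))))
        (hedge i (j - p.len) h1 (by omega))
    · exact absurd ((append_edge_lt p q hpq j h2).symm.trans
        (heq.symm.trans (append_edge_ge p q hpq i (by omega) (by omega))))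
        (hedge j (i - p.len) h2 (by omega))
    · have := hq.1 (i - p.len) (j - p.len) (by omega) (by omega)
        ((append_edge_ge p q hpq i (by omega) (by omega)).symm.trans
          (heq.trans (append_edge_ge p q hpq j (by omega) (by omega))))
      omega
  · intro i j hi hj hij heq
    have hq0 : 0 < q.len := by
      by_contra h0
      exact hqo (q.vert_congr (by omega) (by omega) (by omega))
    have hp0 : 0 < p.len := by
      by_contra h0
      exact hpo (p.vert_congr (by omega) (by omega) (by omega))
    by_cases h1 : i ≤ p.len <;> by_cases h2 : j ≤ p.len
    · exfalso
      have heq' : p.vert ⟨i, by omega⟩ = p.vert ⟨j, by omega⟩ :=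
        (append_vert_le p q hpq i h1).symm.trans (heq.trans (append_vert_le p q hpq j h2))
      obtain ⟨h0, hl⟩ := hp.2 i j (by omega) (by omega) hij heq'
      exact hpo ((p.vert_congr h0.symm (by omega) (by omega)).trans
        (heq'.trans (p.vert_congr hl (by omega) (by omega))))
    · have heq' := (append_vert_le p q hpq i h1).symm.trans
        (heq.trans (append_vert_ge p q hpq j (by omega) (by omega)))
      rcases hvert i (j - p.len) (by omega) (by omega) heq' with ⟨ha, hb⟩ | ⟨ha, hb⟩
      · omega
      · omega
    · omega
    · exfalso
      have heq' := (append_vert_ge p q hpq i (by omega) (by omega)).symm.trans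
        (heq.trans (append_vert_ge p q hpq j (by omega) (by omega)))
      have := hq.2 (i - p.len) (j - p.len) (by omega) (by omega) (by omega) heq'
      omega

theorem append_cuspFree {c : E → V → C} {p q : G.Walk} (hpq : p.tgt = q.src)
    (hp : p.CuspFree c) (hq : q.CuspFree c)
    (hjunc : ∀ (h1 : 0 < p.len) (h2 : 0 < q.len),
      NoCusp3 c (p.edge ⟨p.len - 1, by omega⟩) (q.edge ⟨0, h2⟩) q.src)
    (hnd : (0 < p.len ∧ 0 < q.len) ∨ ¬ (p.append q hpq).IsClosed)
    (hwrap : (p.append q hpq).IsClosed → ∀ (h1 : 0 < p.len) (h2 : 0 < q.len),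
      NoCusp3 c (q.edge ⟨q.len - 1, by omega⟩) (p.edge ⟨0, h1⟩) p.src) :
    (p.append q hpq).CuspFree c := by
  have hlen : (p.append q hpq).len = p.len + q.len := rfl
  apply cuspFree_of
  · intro i h
    by_cases h1 : i + 1 < p.len
    · refine noCusp3_transfer (hp.int i h1) ?_ ?_ ?_
      · exact append_edge_lt p q hpq i (by omega)
      · exact append_edge_lt p q hpq (i + 1) (by omega)
      · exact append_vert_le p q hpq (i + 1) (by omega)
    · by_cases h2 : i + 1 = p.len
      · refine noCusp3_transfer (hjunc (by omega) (by omega)) ?_ ?_ ?_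
        · exact (append_edge_lt p q hpq i (by omega)).trans
            (p.edge_congr (by omega) (by omega) (by omega))
        · exact (append_edge_ge p q hpq (i + 1) (by omega) (by omega)).trans
            (q.edge_congr (by omega) (by omega) (by omega))
        · exact (append_vert_le p q hpq (i + 1) (by omega)).trans
            ((p.vert_congr h2 (by omega) (by omega)).trans hpq)
      · refine noCusp3_transfer (hq.int (i - p.len) (by omega)) ?_ ?_ ?_
        · exact append_edge_ge p q hpq i (by omega) (by omega)
        · exact (append_edge_ge p q hpq (i + 1) (by omega) (by omega)).trans
            (q.edge_congr (by omega) (by omega) (by omega))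
        · exact (append_vert_ge p q hpq (i + 1) (by omega) (by omega)).trans
            (q.vert_congr (by omega) (by omega) (by omega))
  · intro hcl h
    have hpos : 0 < p.len ∧ 0 < q.len := by
      rcases hnd with h' | h'
      · exact h'
      · exact absurd hcl h'
    refine noCusp3_transfer (hwrap hcl hpos.1 hpos.2) ?_ ?_ ?_
    · exact (append_edge_ge p q hpq (p.len + q.len - 1) (by omega) (by omega)).trans
        (q.edge_congr (by omega) (by omega) (by omega))
    · exact append_edge_lt p q hpq 0 (by omega)
    · exact append_src p q hpq

theorem inSub_self (p : G.Walk) : p.InSub p.toSub :=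
  ⟨fun i h => ⟨i, h, rfl⟩, fun i h => ⟨i, h, rfl⟩⟩

theorem segment_inSub {p : G.Walk} {S : G.Subgraph} (h : p.InSub S) (a b : ℕ)
    (hab : a ≤ b) (hb : b ≤ p.len) : (p.segment a b hab hb).InSub S :=
  ⟨fun i hi => h.1 (a + i) (by have : (p.segment a b hab hb).len = b - a := rfl; omega),
   fun i hi => h.2 (a + i) (by have : (p.segment a b hab hb).len = b - a := rfl; omega)⟩

theorem reverse_inSub {p : G.Walk} {S : G.Subgraph} (h : p.InSub S) :
    p.reverse.InSub S :=
  ⟨fun i hi => h.1 (p.len - i) (by omega), fun i hi => h.2 (p.len - 1 - i)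
    (by have : p.reverse.len = p.len := rfl; omega)⟩

theorem append_inSub {p q : G.Walk} {S : G.Subgraph} (hpq : p.tgt = q.src)
    (h1 : p.InSub S) (h2 : q.InSub S) : (p.append q hpq).InSub S := by
  have hlen : (p.append q hpq).len = p.len + q.len := rfl
  constructor
  · intro i hi
    by_cases h : i ≤ p.len
    · rw [show (p.append q hpq).vert ⟨i, hi⟩ = p.vert ⟨i, by omega⟩ from
        append_vert_le p q hpq i h]
      exact h1.1 i (by omega)
    · rw [show (p.append q hpq).vert ⟨i, hi⟩ = q.vert ⟨i - p.len, by omega⟩ from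
        append_vert_ge p q hpq i (by omega) (by omega)]
      exact h2.1 (i - p.len) (by omega)
  · intro i hi
    by_cases h : i < p.len
    · rw [show (p.append q hpq).edge ⟨i, hi⟩ = p.edge ⟨i, h⟩ from
        append_edge_lt p q hpq i h]
      exact h1.2 i h
    · rw [show (p.append q hpq).edge ⟨i, hi⟩ = q.edge ⟨i - p.len, by omega⟩ from
        append_edge_ge p q hpq i (by omega) (by omega)]
      exact h2.2 (i - p.len) (by omega)

theorem exists_first_hit (p : G.Walk) (P : V → Prop)
    (hex : ∃ (i : ℕ) (hi : i < p.len + 1), P (p.vert ⟨i, hi⟩)) :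
    ∃ (i : ℕ) (hi : i < p.len + 1), P (p.vert ⟨i, hi⟩) ∧
      ∀ (j : ℕ) (hj : j < p.len + 1), j < i → ¬ P (p.vert ⟨j, hj⟩) := by
  classical
  have hex' : ∃ n : ℕ, ∃ hn : n < p.len + 1, P (p.vert ⟨n, hn⟩) := by
    obtain ⟨i, hi, hP⟩ := hex
    exact ⟨i, hi, hP⟩
  obtain ⟨hk, hPk⟩ := Nat.find_spec hex'
  exact ⟨Nat.find hex', hk, hPk, fun j hj hji hPj => Nat.find_min hex' hji ⟨hj, hPj⟩⟩

theorem NoCusp3.ne_color {c : E → V → C} {f g : E} {z : V} (h : NoCusp3 c f g z)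
    (hne : f ≠ g) : c f z ≠ c g z := by
  rcases h with h | h
  · exact absurd h hne
  · exact h

theorem IsOpen.pos {p : G.Walk} (h : p.IsOpen) : 0 < p.len := by
  by_contra h0
  exact h (p.vert_congr (by omega) (by omega) (by omega))

theorem simple_vert_ne {p : G.Walk} (hs : p.IsSimple) {i j : ℕ} (hi : i < p.len + 1)
    (hj : j < p.len + 1) (hij : i < j) (hne : ¬(i = 0 ∧ j = p.len)) :
    p.vert ⟨i, hi⟩ ≠ p.vert ⟨j, hj⟩ := fun heq => hne (hs.2 i j hi hj hij heq)

theorem memV_lt {ω : G.Walk} (hcl : ω.IsClosed) (h0 : 0 < ω.len) {x : V}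
    (hx : ω.MemV x) : ∃ (i : ℕ) (hi : i < ω.len), ω.vert ⟨i, by omega⟩ = x := by
  obtain ⟨i, hi, hvi⟩ := hx
  by_cases h : i < ω.len
  · exact ⟨i, h, hvi⟩
  · exact ⟨0, h0, (hcl.trans (ω.vert_congr (by omega) (by omega) hi)).trans hvi⟩

/-- The two arcs of a cusp-free cycle between two positions, with distinct
starting colors and distinct ending colors. -/
theorem arc_pair {c : E → V → C} {ω : G.Walk} (hcyc : ω.IsCycle) (hcf : ω.CuspFree c)
    (i j : ℕ) (hij : i < j) (hjn : j < ω.len) :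
    ∃ (w₁ w₂ : G.Walk) (h₁ : 0 < w₁.len) (h₂ : 0 < w₂.len),
      (w₁.IsSimple ∧ w₁.CuspFree c ∧ w₁.src = ω.vert ⟨i, by omega⟩ ∧
        w₁.tgt = ω.vert ⟨j, by omega⟩ ∧ w₁.InSub ω.toSub) ∧
      (w₂.IsSimple ∧ w₂.CuspFree c ∧ w₂.src = ω.vert ⟨i, by omega⟩ ∧
        w₂.tgt = ω.vert ⟨j, by omega⟩ ∧ w₂.InSub ω.toSub) ∧
      c (w₁.edge ⟨0, h₁⟩) w₁.src ≠ c (w₂.edge ⟨0, h₂⟩) w₂.src ∧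
      c (w₁.edge ⟨w₁.len - 1, by omega⟩) w₁.tgt ≠
        c (w₂.edge ⟨w₂.len - 1, by omega⟩) w₂.tgt := by
  obtain ⟨hs, hcl, hpos⟩ := hcyc
  have hn2 : 2 ≤ ω.len := IsCycle.two_le_len ⟨hs, hcl, hpos⟩
  -- the forward arc
  set A := ω.segment i j (by omega) (by omega) with hA
  have hAlen : A.len = j - i := rfl
  have hA1 : 0 < A.len := by omega
  have hAs : A.IsSimple := segment_isSimple hs _ _ _ _
  have hAcf : A.CuspFree c := segment_cuspFree hs hcf _ _ _ _
  have hAsrc : A.src = ω.vert ⟨i, by omega⟩ := segment_src ω i j _ _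
  have hAtgt : A.tgt = ω.vert ⟨j, by omega⟩ := segment_tgt ω i j _ _
  have hAin : A.InSub ω.toSub := segment_inSub (inSub_self ω) _ _ _ _
  have hAe0 : A.edge ⟨0, hA1⟩ = ω.edge ⟨i, by omega⟩ :=
    (segment_edge ω i j _ _ 0 hA1).trans (ω.edge_congr (by omega) _ _)
  have hAel : A.edge ⟨A.len - 1, by omega⟩ = ω.edge ⟨j - 1, by omega⟩ :=
    (segment_edge ω i j _ _ (A.len - 1) (by omega)).trans (ω.edge_congr (by omega) _ _)
  by_cases hi0 : i = 0
  · -- second arc is the reversed segment from j to the end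
    subst hi0
    set R := ω.segment j ω.len (by omega) (le_refl _) with hR
    have hRlen : R.len = ω.len - j := rfl
    set B := R.reverse with hB
    have hBlen : B.len = R.len := rfl
    have hB1 : 0 < B.len := by omega
    have hBs : B.IsSimple := reverse_isSimple (segment_isSimple hs _ _ _ _)
    have hBcf : B.CuspFree c := reverse_cuspFree (segment_cuspFree hs hcf _ _ _ _)
    have hBsrc : B.src = ω.vert ⟨0, by omega⟩ :=
      (reverse_src R).trans ((segment_tgt ω j ω.len _ _).trans hcl.symm)
    have hBtgt : B.tgt = ω.vert ⟨j, by omega⟩ :=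
      (reverse_tgt R).trans (segment_src ω j ω.len _ _)
    have hBin : B.InSub ω.toSub := reverse_inSub (segment_inSub (inSub_self ω) _ _ _ _)
    have hBe0 : B.edge ⟨0, hB1⟩ = ω.edge ⟨ω.len - 1, by omega⟩ := by
      refine (reverse_edge R 0 hB1).trans ?_
      refine ((segment_edge ω j ω.len _ _ (R.len - 1 - 0) (by omega)).trans
        (ω.edge_congr (by omega) _ _))
    have hBel : B.edge ⟨B.len - 1, by omega⟩ = ω.edge ⟨j, by omega⟩ := by
      refine (reverse_edge R (B.len - 1) (by omega)).trans ?_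
      exact (segment_edge ω j ω.len _ _ (R.len - 1 - (B.len - 1)) (by omega)).trans
        (ω.edge_congr (by omega) _ _)
    refine ⟨A, B, hA1, hB1, ⟨hAs, hAcf, hAsrc, hAtgt, hAin⟩,
      ⟨hBs, hBcf, hBsrc, hBtgt, hBin⟩, ?_, ?_⟩
    · rw [hAe0, hAsrc, hBe0, hBsrc]
      have hw := (hcf.wrap hcl hpos).ne_color (fun heq => by
        have := hs.1 (ω.len - 1) 0 (by omega) (by omega) heq
        omega)
      exact fun heq => hw (heq.symm)
    · rw [hAel, hAtgt, hBel, hBtgt]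
      have h3 : NoCusp3 c (ω.edge ⟨j - 1, by omega⟩) (ω.edge ⟨j, by omega⟩)
          (ω.vert ⟨j, by omega⟩) :=
        noCusp3_transfer (hcf.int (j - 1) (by omega)) rfl
          (ω.edge_congr (by omega) (by omega) (by omega))
          (ω.vert_congr (by omega) (by omega) (by omega))
      exact h3.ne_color (fun heq => by
        have := hs.1 (j - 1) j (by omega) (by omega) heq
        omega)
  · -- second arc wraps through position 0
    have hi1 : 1 ≤ i := by omega
    set S1 := ω.segment j ω.len (by omega) (le_refl _) with hS1
    set S2 := ω.segment 0 i (by omega) (by omega) with hS2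
    have hS1len : S1.len = ω.len - j := rfl
    have hS2len : S2.len = i := rfl
    have hJ : S1.tgt = S2.src :=
      (segment_tgt ω j ω.len _ _).trans (hcl.symm.trans (segment_src ω 0 i _ _).symm)
    set W := S1.append S2 hJ with hW
    have hWlen : W.len = S1.len + S2.len := rfl
    have hS1o : S1.IsOpen := by
      rw [IsOpen, segment_src, segment_tgt]
      exact simple_vert_ne hs _ _ (by omega) (by omega)
    have hS2o : S2.IsOpen := by
      rw [IsOpen, segment_src, segment_tgt]
      exact simple_vert_ne hs _ _ (by omega) (by omega)
    have hWs : W.IsSimple := by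
      refine append_isSimple hJ (segment_isSimple hs _ _ _ _) (segment_isSimple hs _ _ _ _)
        hS1o hS2o ?_ ?_
      · intro m m' hm hm' heq
        have heq' : ω.vert ⟨0 + m', by omega⟩ = ω.vert ⟨j + m, by omega⟩ :=
          ((segment_vert ω 0 i _ _ m' (by omega)).symm.trans
            (heq.symm.trans (segment_vert ω j ω.len _ _ m (by omega))))
        have := hs.2 (0 + m') (j + m) (by omega) (by omega) (by omega) heq'
        left
        omega
      · intro m m' hm hm' heq
        have heq' : ω.edge ⟨j + m, by omega⟩ = ω.edge ⟨0 + m', by omega⟩ :=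
          ((segment_edge ω j ω.len _ _ m (by omega)).symm.trans
            (heq.trans (segment_edge ω 0 i _ _ m' (by omega))))
        have := hs.1 (j + m) (0 + m') (by omega) (by omega) heq'
        omega
    have hWsrc : W.src = ω.vert ⟨j, by omega⟩ :=
      (append_src S1 S2 hJ).trans (segment_src ω j ω.len _ _)
    have hWtgt : W.tgt = ω.vert ⟨i, by omega⟩ :=
      (append_tgt S1 S2 hJ).trans (segment_tgt ω 0 i _ _)
    have hWo : W.IsOpen := by
      rw [IsOpen, hWsrc, hWtgt]
      exact (simple_vert_ne hs _ _ (by omega) (by omega)).symm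
    have hWcf : W.CuspFree c := by
      refine append_cuspFree hJ (segment_cuspFree hs hcf _ _ _ _)
        (segment_cuspFree hs hcf _ _ _ _) ?_ (Or.inr hWo) (fun hcl' _ _ => absurd hcl' hWo)
      intro hp1 hp2
      refine noCusp3_transfer (hcf.wrap hcl hpos) ?_ ?_ ?_
      · exact (segment_edge ω j ω.len _ _ (S1.len - 1) (by omega)).trans
          (ω.edge_congr (by omega) _ _)
      · exact (segment_edge ω 0 i _ _ 0 hp2).trans (ω.edge_congr (by omega) _ _)
      · exact segment_src ω 0 i _ _
    have hWin : W.InSub ω.toSub :=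
      append_inSub hJ (segment_inSub (inSub_self ω) _ _ _ _)
        (segment_inSub (inSub_self ω) _ _ _ _)
    have hWe0 : W.edge ⟨0, by omega⟩ = ω.edge ⟨j, by omega⟩ :=
      (append_edge_lt S1 S2 hJ 0 (by omega)).trans
        ((segment_edge ω j ω.len _ _ 0 (by omega)).trans (ω.edge_congr (by omega) _ _))
    have hWel : W.edge ⟨W.len - 1, by omega⟩ = ω.edge ⟨i - 1, by omega⟩ :=
      (append_edge_ge S1 S2 hJ (W.len - 1) (by omega) (by omega)).trans
        ((segment_edge ω 0 i _ _ (W.len - 1 - S1.len) (by omega)).trans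
          (ω.edge_congr (by omega) _ _))
    set B := W.reverse with hB
    have hBlen : B.len = W.len := rfl
    have hB1 : 0 < B.len := by omega
    have hBsrc : B.src = ω.vert ⟨i, by omega⟩ := (reverse_src W).trans hWtgt
    have hBtgt : B.tgt = ω.vert ⟨j, by omega⟩ := (reverse_tgt W).trans hWsrc
    have hBe0 : B.edge ⟨0, hB1⟩ = ω.edge ⟨i - 1, by omega⟩ :=
      (reverse_edge W 0 hB1).trans ((W.edge_congr (by omega) _ _).trans hWel)
    have hBel : B.edge ⟨B.len - 1, by omega⟩ = ω.edge ⟨j, by omega⟩ :=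
      (reverse_edge W (B.len - 1) (by omega)).trans
        ((W.edge_congr (by omega) _ _).trans hWe0)
    refine ⟨A, B, hA1, hB1, ⟨hAs, hAcf, hAsrc, hAtgt, hAin⟩,
      ⟨reverse_isSimple hWs, reverse_cuspFree hWcf, hBsrc, hBtgt, reverse_inSub hWin⟩,
      ?_, ?_⟩
    · rw [hAe0, hAsrc, hBe0, hBsrc]
      have h3 : NoCusp3 c (ω.edge ⟨i - 1, by omega⟩) (ω.edge ⟨i, by omega⟩)
          (ω.vert ⟨i, by omega⟩) :=
        noCusp3_transfer (hcf.int (i - 1) (by omega)) rfl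
          (ω.edge_congr (by omega) (by omega) (by omega))
          (ω.vert_congr (by omega) (by omega) (by omega))
      exact (h3.ne_color (fun heq => by
        have := hs.1 (i - 1) i (by omega) (by omega) heq
        omega)).symm
    · rw [hAel, hAtgt, hBel, hBtgt]
      have h3 : NoCusp3 c (ω.edge ⟨j - 1, by omega⟩) (ω.edge ⟨j, by omega⟩)
          (ω.vert ⟨j, by omega⟩) :=
        noCusp3_transfer (hcf.int (j - 1) (by omega)) rfl
          (ω.edge_congr (by omega) (by omega) (by omega))
          (ω.vert_congr (by omega) (by omega) (by omega))
      exact h3.ne_color (fun heq => by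
        have := hs.1 (j - 1) j (by omega) (by omega) heq
        omega)

/-- In a cusp-free cycle, between any two distinct vertices there is a simple
open cusp-free arc whose starting color avoids any prescribed color. -/
theorem arc_exists {c : E → V → C} {ω : G.Walk} (hcyc : ω.IsCycle) (hcf : ω.CuspFree c)
    (a b : V) (ha : ω.MemV a) (hb : ω.MemV b) (hab : a ≠ b) (γ : C) :
    ∃ w : G.Walk, w.IsSimple ∧ w.IsOpen ∧ w.CuspFree c ∧ w.src = a ∧ w.tgt = b ∧
      (∀ h : 0 < w.len, c (w.edge ⟨0, h⟩) w.src ≠ γ) ∧ w.InSub ω.toSub := by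
  obtain ⟨i, hi, hva⟩ := memV_lt hcyc.2.1 hcyc.2.2 ha
  obtain ⟨j, hj, hvb⟩ := memV_lt hcyc.2.1 hcyc.2.2 hb
  have hij : i ≠ j := by
    intro h
    exact hab (hva.symm.trans ((ω.vert_congr h (by omega) (by omega)).trans hvb))
  rcases Nat.lt_or_ge i j with hlt | hge
  · obtain ⟨w₁, w₂, h₁, h₂, ⟨hs₁, hcf₁, hsrc₁, htgt₁, hin₁⟩,
      ⟨hs₂, hcf₂, hsrc₂, htgt₂, hin₂⟩, hne0, hnel⟩ := arc_pair hcyc hcf i j hlt hj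
    have hopen₁ : w₁.IsOpen := by
      rw [IsOpen, hsrc₁, htgt₁, hva, hvb]; exact hab
    have hopen₂ : w₂.IsOpen := by
      rw [IsOpen, hsrc₂, htgt₂, hva, hvb]; exact hab
    by_cases hγ : c (w₁.edge ⟨0, h₁⟩) w₁.src ≠ γ
    · exact ⟨w₁, hs₁, hopen₁, hcf₁, hsrc₁.trans hva, htgt₁.trans hvb,
        fun h => hγ, hin₁⟩
    · refine ⟨w₂, hs₂, hopen₂, hcf₂, hsrc₂.trans hva, htgt₂.trans hvb, fun h hc => ?_, hin₂⟩
      rw [not_ne_iff] at hγ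
      exact hne0 (hγ.trans hc.symm)
  · have hlt : j < i := by omega
    obtain ⟨w₁, w₂, h₁, h₂, ⟨hs₁, hcf₁, hsrc₁, htgt₁, hin₁⟩,
      ⟨hs₂, hcf₂, hsrc₂, htgt₂, hin₂⟩, hne0, hnel⟩ := arc_pair hcyc hcf j i hlt hi
    -- use the reversed arcs, whose starting colors are the ending colors
    have hr₁ : 0 < w₁.reverse.len := h₁
    have hr₂ : 0 < w₂.reverse.len := h₂
    have he₁ : w₁.reverse.edge ⟨0, hr₁⟩ = w₁.edge ⟨w₁.len - 1, by omega⟩ :=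
      (reverse_edge w₁ 0 hr₁).trans (w₁.edge_congr (by omega) (by omega) (by omega))
    have he₂ : w₂.reverse.edge ⟨0, hr₂⟩ = w₂.edge ⟨w₂.len - 1, by omega⟩ :=
      (reverse_edge w₂ 0 hr₂).trans (w₂.edge_congr (by omega) (by omega) (by omega))
    have hopen₁ : w₁.reverse.IsOpen := by
      rw [IsOpen, reverse_src, reverse_tgt, hsrc₁, htgt₁, hva, hvb]
      exact hab
    have hopen₂ : w₂.reverse.IsOpen := by
      rw [IsOpen, reverse_src, reverse_tgt, hsrc₂, htgt₂, hva, hvb]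
      exact hab
    by_cases hγ : c (w₁.edge ⟨w₁.len - 1, by omega⟩) w₁.tgt ≠ γ
    · refine ⟨w₁.reverse, reverse_isSimple hs₁, hopen₁, reverse_cuspFree hcf₁,
        (reverse_src w₁).trans (htgt₁.trans hva), (reverse_tgt w₁).trans (hsrc₁.trans hvb),
        fun h hc => ?_, reverse_inSub hin₁⟩
      rw [show w₁.reverse.edge ⟨0, h⟩ = w₁.edge ⟨w₁.len - 1, by omega⟩ from he₁,
        show w₁.reverse.src = w₁.tgt from reverse_src w₁] at hc
      exact hγ hc
    · refine ⟨w₂.reverse, reverse_isSimple hs₂, hopen₂, reverse_cuspFree hcf₂,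
        (reverse_src w₂).trans (htgt₂.trans hva), (reverse_tgt w₂).trans (hsrc₂.trans hvb),
        fun h hc => ?_, reverse_inSub hin₂⟩
      rw [not_ne_iff] at hγ
      rw [show w₂.reverse.edge ⟨0, h⟩ = w₂.edge ⟨w₂.len - 1, by omega⟩ from he₂,
        show w₂.reverse.src = w₂.tgt from reverse_src w₂] at hc
      exact hnel (hγ.trans hc.symm)

theorem memE_memV {ω : G.Walk} {e : E} (he : ω.MemE e) {w : V} (hw : G.inc e w) :
    ω.MemV w := by
  obtain ⟨k, hk, rfl⟩ := he
  rcases (ω.incs k hk w).1 hw with h | h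
  · exact ⟨k, by omega, h.symm⟩
  · exact ⟨k + 1, by omega, h.symm⟩

/-- Reachability by cusp-free paths inside a connected union of cusp-free
cycles, avoiding any prescribed starting color. -/
theorem reach_in_union {c : E → V → C} {Ω : G.Subgraph}
    (F : Set G.Walk) (hF : ∀ ω ∈ F, ω.IsCycle ∧ ω.CuspFree c)
    (hV : Ω.verts = {x | ∃ ω ∈ F, Walk.MemV ω x})
    (hE : Ω.edges = {e | ∃ ω ∈ F, Walk.MemE ω e})
    (hconn : Ω.IsConnected) (y : V) (hy : y ∈ Ω.verts) :
    ∀ v' ∈ Ω.verts, v' ≠ y → ∀ γ : C,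
      ∃ w : G.Walk, w.IsSimple ∧ w.IsOpen ∧ w.CuspFree c ∧ w.src = y ∧ w.tgt = v' ∧
        (∀ h : 0 < w.len, c (w.edge ⟨0, h⟩) w.src ≠ γ) ∧ w.InSub Ω := by
  have step1 : ∀ ω ∈ F, ∀ z, ω.MemV z →
      (z ≠ y → ∀ γ : C, ∃ w : G.Walk, w.IsSimple ∧ w.IsOpen ∧ w.CuspFree c ∧
        w.src = y ∧ w.tgt = z ∧
        (∀ h : 0 < w.len, c (w.edge ⟨0, h⟩) w.src ≠ γ) ∧ w.InSub Ω) →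
      ∀ t, ω.MemV t → t ≠ y → ∀ γ : C,
        ∃ w : G.Walk, w.IsSimple ∧ w.IsOpen ∧ w.CuspFree c ∧ w.src = y ∧ w.tgt = t ∧
        (∀ h : 0 < w.len, c (w.edge ⟨0, h⟩) w.src ≠ γ) ∧ w.InSub Ω := by
    intro ω hωF z hzω hBz t htω hty γ
    obtain ⟨hcyc, hcfω⟩ := hF ω hωF
    have hvΩ : ∀ x, ω.MemV x → x ∈ Ω.verts := fun x hx => by
      rw [hV]; exact ⟨ω, hωF, hx⟩
    have heΩ : ∀ f, ω.MemE f → f ∈ Ω.edges := fun f hf => by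
      rw [hE]; exact ⟨ω, hωF, hf⟩
    have hinΩ : ∀ w : G.Walk, w.InSub ω.toSub → w.InSub Ω := fun w hw =>
      ⟨fun i hi => hvΩ _ (hw.1 i hi), fun i hi => heΩ _ (hw.2 i hi)⟩
    by_cases hyω : ω.MemV y
    · obtain ⟨w, hws, hwo, hwcf, hwsrc, hwtgt, hwstart, hwin⟩ :=
        arc_exists hcyc hcfω y t hyω htω (Ne.symm hty) γ
      exact ⟨w, hws, hwo, hwcf, hwsrc, hwtgt, hwstart, hinΩ w hwin⟩
    · have hzy : z ≠ y := fun h => hyω (h ▸ hzω)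
      obtain ⟨P, hPs, hPo, hPcf, hPsrc, hPtgt, hPstart, hPin⟩ := hBz hzy γ
      obtain ⟨i₀, hi₀, hmem, hfirst⟩ := exists_first_hit P (fun x => ω.MemV x)
        ⟨P.len, by omega, by
          show ω.MemV (P.vert ⟨P.len, by omega⟩)
          have h' : P.vert ⟨P.len, by omega⟩ = z := hPtgt
          rw [h']; exact hzω⟩
      have hi₀pos : 0 < i₀ := by
        rcases Nat.eq_zero_or_pos i₀ with h0 | h
        · exfalso
          apply hyω
          subst h0
          have h' : P.vert ⟨0, hi₀⟩ = y := hPsrc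
          rw [← h']
          exact hmem
        · exact h
      have hP'len : (P.segment 0 i₀ (by omega) (by omega)).len = i₀ := rfl
      set P' := P.segment 0 i₀ (by omega) (by omega) with hP'
      have hP's : P'.IsSimple := segment_isSimple hPs _ _ _ _
      have hP'cf : P'.CuspFree c := segment_cuspFree hPs hPcf _ _ _ _
      have hP'src : P'.src = y := (segment_src P 0 i₀ (by omega) (by omega)).trans hPsrc
      have hP'tgt : P'.tgt = P.vert ⟨i₀, hi₀⟩ := segment_tgt P 0 i₀ (by omega) (by omega)
      have hP'in : P'.InSub Ω := segment_inSub hPin _ _ _ _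
      have hP'e0 : ∀ h : 0 < P'.len, P'.edge ⟨0, h⟩ = P.edge ⟨0, by omega⟩ := fun h =>
        segment_edge P 0 i₀ (by omega) (by omega) 0 h
      have hP'start : ∀ h : 0 < P'.len, c (P'.edge ⟨0, h⟩) P'.src ≠ γ := by
        intro h hc
        rw [hP'e0 h, show P'.src = P.src from segment_src P 0 i₀ (by omega) (by omega)] at hc
        exact hPstart (by omega) hc
      have hyz' : y ≠ P.vert ⟨i₀, hi₀⟩ := fun h => hyω (by rw [h]; exact hmem)
      have hP'o : P'.IsOpen := by
        rw [IsOpen, hP'src, hP'tgt]; exact hyz'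
      by_cases hz't : P.vert ⟨i₀, hi₀⟩ = t
      · exact ⟨P', hP's, hP'o, hP'cf, hP'src, hP'tgt.trans hz't, hP'start, hP'in⟩
      · obtain ⟨A, hAs, hAo, hAcf, hAsrc, hAtgt, hAstart, hAin⟩ :=
          arc_exists hcyc hcfω (P.vert ⟨i₀, hi₀⟩) t hmem htω hz't
            (c (P.edge ⟨i₀ - 1, by omega⟩) (P.vert ⟨i₀, hi₀⟩))
        have hJ : P'.tgt = A.src := hP'tgt.trans hAsrc.symm
        have hXvert : ∀ (m m' : ℕ) (hm : m < P'.len + 1) (hm' : m' < A.len + 1),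
            P'.vert ⟨m, hm⟩ = A.vert ⟨m', hm'⟩ →
            (m = P'.len ∧ m' = 0) ∨ (m = 0 ∧ m' = A.len) := by
          intro m m' hm hm' heq
          by_cases hmi : m < i₀
          · exfalso
            have h1 : ω.MemV (A.vert ⟨m', hm'⟩) := hAin.1 m' hm'
            rw [← heq] at h1
            exact hfirst (0 + m) (by omega) (by omega) h1
          · have hmi₀ : m = i₀ := by omega
            by_cases hm'0 : m' = 0
            · left; exact ⟨by omega, hm'0⟩
            · exfalso
              have h2 : A.vert ⟨0, by omega⟩ = A.vert ⟨m', hm'⟩ := by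
                have hsrcz : A.vert ⟨0, by omega⟩ = P.vert ⟨i₀, hi₀⟩ := hAsrc
                rw [hsrcz, ← heq]
                exact hP'tgt.symm.trans (P'.vert_congr (by omega) (by omega) hm)
              obtain ⟨-, hm'len⟩ := hAs.2 0 m' (by omega) hm' (by omega) h2
              exact hAo (h2.trans (A.vert_congr hm'len hm' (by omega)))
        have hXedge : ∀ (m m' : ℕ) (hm : m < P'.len) (hm' : m' < A.len),
            P'.edge ⟨m, hm⟩ ≠ A.edge ⟨m', hm'⟩ := by
          intro m m' hm hm' heq
          apply hfirst (0 + m) (by omega) (by omega)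
          apply memE_memV (hAin.2 m' hm')
          rw [← heq]
          exact (P.incs (0 + m) (by omega) _).2 (Or.inl rfl)
        have hA0 : 0 < A.len := hAo.pos
        have hP'lastedge : P'.edge ⟨P'.len - 1, by omega⟩ = P.edge ⟨i₀ - 1, by omega⟩ :=
          (segment_edge P 0 i₀ (by omega) (by omega) (P'.len - 1) (by omega)).trans
            (P.edge_congr (by omega) (by omega) (by omega))
        have hjunc : ∀ (h1 : 0 < P'.len) (h2 : 0 < A.len),
            NoCusp3 c (P'.edge ⟨P'.len - 1, by omega⟩) (A.edge ⟨0, h2⟩) A.src := by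
          intro h1 h2
          refine Or.inr (fun hcc => hAstart h2 (hcc.symm.trans ?_))
          rw [hP'lastedge, hAsrc]
        set X := P'.append A hJ with hX
        have hXlen : X.len = P'.len + A.len := rfl
        have hXsrc : X.src = y := (append_src P' A hJ).trans hP'src
        have hXtgt : X.tgt = t := (append_tgt P' A hJ).trans hAtgt
        have hXo : X.IsOpen := by
          rw [IsOpen, hXsrc, hXtgt]; exact Ne.symm hty
        refine ⟨X, append_isSimple hJ hP's hAs hP'o hAo hXvert hXedge, hXo,
          append_cuspFree hJ hP'cf hAcf hjunc (Or.inr hXo) (fun hcl _ _ => absurd hcl hXo),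
          hXsrc, hXtgt, ?_, append_inSub hJ hP'in (hinΩ A hAin)⟩
        intro h hc
        rw [show X.edge ⟨0, h⟩ = P'.edge ⟨0, by omega⟩ from
            append_edge_lt P' A hJ 0 (by omega),
          show X.src = P'.src from append_src P' A hJ] at hc
        exact hP'start (by omega) hc
  intro v' hv' hv'y γ
  obtain ⟨P0, hP0in, hP0src, hP0tgt⟩ := hconn.2 y hy v' hv'
  have claim : ∀ (i : ℕ) (hi : i < P0.len + 1), P0.vert ⟨i, hi⟩ ≠ y → ∀ γ : C,
      ∃ w : G.Walk, w.IsSimple ∧ w.IsOpen ∧ w.CuspFree c ∧ w.src = y ∧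
        w.tgt = P0.vert ⟨i, hi⟩ ∧
        (∀ h : 0 < w.len, c (w.edge ⟨0, h⟩) w.src ≠ γ) ∧ w.InSub Ω := by
    intro i
    induction i with
    | zero =>
      intro hi hne
      exact absurd hP0src hne
    | succ k ih =>
      intro hi
      have hek : P0.edge ⟨k, by omega⟩ ∈ Ω.edges := hP0in.2 k (by omega)
      rw [hE] at hek
      obtain ⟨ω, hωF, hmemE⟩ := hek
      have h1 : ω.MemV (P0.vert ⟨k, by omega⟩) :=
        memE_memV hmemE ((P0.incs k (by omega) _).2 (Or.inl rfl))
      have h2 : ω.MemV (P0.vert ⟨k + 1, hi⟩) :=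
        memE_memV hmemE ((P0.incs k (by omega) _).2 (Or.inr rfl))
      intro hne γ'
      by_cases hky : P0.vert ⟨k, by omega⟩ = y
      · -- the previous vertex is y itself: go directly on ω
        exact step1 ω hωF y (by rw [← hky]; exact h1)
          (fun h _ => absurd rfl h) _ h2 hne γ'
      · exact step1 ω hωF _ h1 (fun _ => ih (by omega) hky) _ h2 hne γ'
  obtain ⟨w, hws, hwo, hwcf, hwsrc, hwtgt, hwstart, hwin⟩ :=
    claim P0.len (by omega) (fun h => hv'y (hP0tgt.symm.trans h)) γ
  exact ⟨w, hws, hwo, hwcf, hwsrc, hwtgt.trans hP0tgt, hwstart, hwin⟩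

end Walk
end Multigraph
end Aux

open Multigraph in
/-- No `⇝`-path leaving a maximal connected union of cusp-free cycles through
a non-cusp-point can come back to it. -/
theorem no_step_back_to_max_union
    {V E C : Type} [Fintype V] [Fintype E] [Fintype C]
    (G : Multigraph V E) (c : E → V → C)
    (Ω : G.Subgraph) (hΩ : Ω ∈ G.MaxCFCU c)
    (e : E) (v u : V) (hvu : v ≠ u)
    (hends : ∀ w : V, G.inc e w ↔ w = v ∨ w = u)
    (hv : v ∈ Ω.verts) (hu : u ∉ Ω.verts)
    (hnc : ¬ G.IsCuspPoint c v (c e v)) :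
    ∀ x ∈ Ω.verts, ∀ α : C, ¬ G.Steps c u (c e u) x α := by
  intro x hx α hsteps
  obtain ⟨⟨F, hF, hV, hE⟩, hconnΩ, hmax⟩ := hΩ
  obtain ⟨p, hps, hpo, hpcf, hpsrc, hptgt, hpstart, -⟩ := hsteps
  -- the first position of `p` lying in `Ω`
  obtain ⟨i₀, hi₀, hmem, hfirst⟩ := Walk.exists_first_hit p (fun z => z ∈ Ω.verts)
    ⟨p.len, by omega, by
      show p.vert ⟨p.len, by omega⟩ ∈ Ω.verts
      rw [show p.vert ⟨p.len, by omega⟩ = x from hptgt]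
      exact hx⟩
  have hi₀pos : 0 < i₀ := by
    rcases Nat.eq_zero_or_pos i₀ with h0 | h
    · exfalso
      apply hu
      subst h0
      have h' : p.vert ⟨0, hi₀⟩ = u := hpsrc
      rw [← h']
      exact hmem
    · exact h
  have hqlen : (p.segment 0 i₀ (by omega) (by omega)).len = i₀ := rfl
  set q := p.segment 0 i₀ (by omega) (by omega) with hq
  have hqs : q.IsSimple := Walk.segment_isSimple hps _ _ _ _
  have hqcf : q.CuspFree c := Walk.segment_cuspFree hps hpcf _ _ _ _
  have hqsrc : q.src = u := hpsrc
  have hqtgt : q.tgt = p.vert ⟨i₀, hi₀⟩ := Walk.segment_tgt p 0 i₀ (by omega) (by omega)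
  have hyΩ : p.vert ⟨i₀, hi₀⟩ ∈ Ω.verts := hmem
  have heΩ' : e ∉ Ω.edges := fun hee => hu (Ω.edge_mem e hee u ((hends u).2 (Or.inr rfl)))
  have hqeΩ : ∀ (m : ℕ) (hm : m < i₀), p.edge ⟨m, by omega⟩ ∉ Ω.edges := by
    intro m hm hee
    exact hfirst m (by omega) (by omega)
      (Ω.edge_mem _ hee _ ((p.incs m (by omega) _).2 (Or.inl rfl)))
  have he_q : ∀ (m : ℕ) (hm : m < i₀), p.edge ⟨m, by omega⟩ ≠ e := by
    intro m hm heq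
    have hincv : G.inc (p.edge ⟨m, by omega⟩) v := by
      rw [heq]; exact (hends v).2 (Or.inl rfl)
    rcases (p.incs m (by omega) v).1 hincv with h | h
    · exact hfirst m (by omega) (by omega) (by rw [← h]; exact hv)
    · have hm1 : m + 1 = i₀ := by
        by_contra hne
        exact hfirst (m + 1) (by omega) (by omega) (by rw [← h]; exact hv)
      have hincu : G.inc (p.edge ⟨m, by omega⟩) u := by
        rw [heq]; exact (hends u).2 (Or.inr rfl)
      rcases (p.incs m (by omega) u).1 hincu with h' | h'
      · by_cases hm0 : m = 0
        · subst hm0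
          apply hpstart (by omega)
          rw [show p.edge ⟨0, by omega⟩ = e from heq, hpsrc]
        · have h0 : p.vert ⟨0, by omega⟩ = p.vert ⟨m, by omega⟩ :=
            (show p.vert ⟨0, by omega⟩ = u from hpsrc).trans h'
          have := hps.2 0 m (by omega) (by omega) (by omega) h0
          omega
      · apply hu
        rw [h']
        rw [p.vert_congr hm1 (by omega) hi₀]
        exact hmem
  -- the path `Y` from `u` to `v`, leaving `Ω` immediately
  have hYex : ∃ Y : G.Walk, Y.IsSimple ∧ Y.CuspFree c ∧ Y.src = u ∧ Y.tgt = v ∧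
      Y.IsOpen ∧ (∀ h : 0 < Y.len, c (Y.edge ⟨0, h⟩) Y.src ≠ c e u) ∧
      (∀ (m : ℕ) (hm : m < Y.len + 1), Y.vert ⟨m, hm⟩ = u → m = 0) ∧
      (∀ (m : ℕ) (hm : m < Y.len + 1), Y.vert ⟨m, hm⟩ = v → m = Y.len) ∧
      (∀ (m : ℕ) (hm : m < Y.len), Y.edge ⟨m, hm⟩ ≠ e) := by
    have hqstart : ∀ h : 0 < q.len, c (q.edge ⟨0, h⟩) q.src ≠ c e u := by
      intro h hc
      rw [show q.edge ⟨0, h⟩ = p.edge ⟨0, by omega⟩ from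
        Walk.segment_edge p 0 i₀ (by omega) (by omega) 0 h,
        show q.src = p.src from Walk.segment_src p 0 i₀ (by omega) (by omega)] at hc
      exact hpstart (by omega) hc
    have hqvertu : ∀ (m : ℕ) (hm : m < q.len + 1), q.vert ⟨m, hm⟩ = u → m = 0 := by
      intro m hm hequ
      have hequ' : p.vert ⟨0 + m, by omega⟩ = u := hequ
      by_cases hm0 : m = 0
      · exact hm0
      · exfalso
        have h0 : p.vert ⟨0, by omega⟩ = p.vert ⟨0 + m, by omega⟩ :=
          (show p.vert ⟨0, by omega⟩ = u from hpsrc).trans hequ'.symm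
        obtain ⟨-, hmlen⟩ := hps.2 0 (0 + m) (by omega) (by omega) (by omega) h0
        apply hu
        rw [← hequ', p.vert_congr (show 0 + m = i₀ by omega) (by omega) hi₀]
        exact hmem
    by_cases hyv : p.vert ⟨i₀, hi₀⟩ = v
    · -- the path hits `Ω` exactly at `v`
      refine ⟨q, hqs, hqcf, hqsrc, hqtgt.trans hyv, ?_, hqstart, hqvertu, ?_, ?_⟩
      · rw [Walk.IsOpen, hqsrc, hqtgt.trans hyv]
        exact fun h => hvu h.symm
      · intro m hm heqv
        by_cases hmi : m < i₀
        · exfalso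
          apply hfirst (0 + m) (by omega) (by omega)
          show p.vert ⟨0 + m, by omega⟩ ∈ Ω.verts
          rw [show p.vert ⟨0 + m, by omega⟩ = v from heqv]
          exact hv
        · omega
      · intro m hm heq
        exact he_q (0 + m) (by omega) heq
    · -- continue from the entry point to `v` inside `Ω`
      obtain ⟨w, hws, hwo, hwcf, hwsrc, hwtgt, hwstart, hwin⟩ :=
        Walk.reach_in_union F hF hV hE hconnΩ (p.vert ⟨i₀, hi₀⟩) hyΩ v hv
          (fun h => hyv h.symm) (c (p.edge ⟨i₀ - 1, by omega⟩) (p.vert ⟨i₀, hi₀⟩))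
      have hJ : q.tgt = w.src := hqtgt.trans hwsrc.symm
      have hYvert : ∀ (m m' : ℕ) (hm : m < q.len + 1) (hm' : m' < w.len + 1),
          q.vert ⟨m, hm⟩ = w.vert ⟨m', hm'⟩ →
          (m = q.len ∧ m' = 0) ∨ (m = 0 ∧ m' = w.len) := by
        intro m m' hm hm' heq
        by_cases hmi : m < i₀
        · exfalso
          have h1 : w.vert ⟨m', hm'⟩ ∈ Ω.verts := hwin.1 m' hm'
          rw [← heq] at h1
          exact hfirst (0 + m) (by omega) (by omega) h1
        · have hmi₀ : m = i₀ := by omega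
          by_cases hm'0 : m' = 0
          · left; exact ⟨by omega, hm'0⟩
          · exfalso
            have h2 : w.vert ⟨0, by omega⟩ = w.vert ⟨m', hm'⟩ := by
              have hsrcz : w.vert ⟨0, by omega⟩ = p.vert ⟨i₀, hi₀⟩ := hwsrc
              rw [hsrcz, ← heq]
              exact hqtgt.symm.trans (q.vert_congr (by omega) (by omega) hm)
            obtain ⟨-, hm'len⟩ := hws.2 0 m' (by omega) hm' (by omega) h2
            apply hyv
            exact hwsrc.symm.trans
              ((h2.trans (w.vert_congr hm'len hm' (by omega))).trans hwtgt)
      have hYedge : ∀ (m m' : ℕ) (hm : m < q.len) (hm' : m' < w.len),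
          q.edge ⟨m, hm⟩ ≠ w.edge ⟨m', hm'⟩ := by
        intro m m' hm hm' heq
        apply hqeΩ (0 + m) (by omega)
        rw [show p.edge ⟨0 + m, by omega⟩ = w.edge ⟨m', hm'⟩ from heq]
        exact hwin.2 m' hm'
      have hjuncB : ∀ (h1 : 0 < q.len) (h2 : 0 < w.len),
          Walk.NoCusp3 c (q.edge ⟨q.len - 1, by omega⟩) (w.edge ⟨0, h2⟩) w.src := by
        intro h1 h2
        refine Or.inr (fun hcc => hwstart h2 (hcc.symm.trans ?_))
        rw [show q.edge ⟨q.len - 1, by omega⟩ = p.edge ⟨i₀ - 1, by omega⟩ from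
          (Walk.segment_edge p 0 i₀ (by omega) (by omega) (q.len - 1) (by omega)).trans
            (p.edge_congr (by omega) (by omega) (by omega)), hwsrc]
      set Y := q.append w hJ with hY
      have hYlen : Y.len = q.len + w.len := rfl
      have hYsrc : Y.src = u := (Walk.append_src q w hJ).trans hqsrc
      have hYtgt : Y.tgt = v := (Walk.append_tgt q w hJ).trans hwtgt
      have hYo : Y.IsOpen := by
        rw [Walk.IsOpen, hYsrc, hYtgt]
        exact fun h => hvu h.symm
      refine ⟨Y, Walk.append_isSimple hJ hqs hws ?_ hwo hYvert hYedge,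
        Walk.append_cuspFree hJ hqcf hwcf hjuncB (Or.inr hYo) (fun hcl _ _ => absurd hcl hYo),
        hYsrc, hYtgt, hYo, ?_, ?_, ?_, ?_⟩
      · rw [Walk.IsOpen, hqsrc, hqtgt]
        exact fun h => hu (by rw [h]; exact hmem)
      · intro h hc
        rw [show Y.edge ⟨0, h⟩ = q.edge ⟨0, by omega⟩ from
            Walk.append_edge_lt q w hJ 0 (by omega),
          show Y.src = q.src from Walk.append_src q w hJ] at hc
        exact hqstart (by omega) hc
      · intro m hm hequ
        by_cases hmq : m ≤ q.len
        · rw [show Y.vert ⟨m, hm⟩ = q.vert ⟨m, by omega⟩ from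
            Walk.append_vert_le q w hJ m hmq] at hequ
          exact hqvertu m (by omega) hequ
        · exfalso
          rw [show Y.vert ⟨m, hm⟩ = w.vert ⟨m - q.len, by omega⟩ from
            Walk.append_vert_ge q w hJ m (by omega) (by omega)] at hequ
          exact hu (by rw [← hequ]; exact hwin.1 (m - q.len) (by omega))
      · intro m hm heqv
        by_cases hmq : m < i₀
        · exfalso
          apply hfirst (0 + m) (by omega) (by omega)
          have h1 : Y.vert ⟨m, hm⟩ = q.vert ⟨m, by omega⟩ :=
            Walk.append_vert_le q w hJ m (by omega)
          rw [h1] at heqv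
          show p.vert ⟨0 + m, by omega⟩ ∈ Ω.verts
          rw [show p.vert ⟨0 + m, by omega⟩ = v from heqv]
          exact hv
        · by_cases hmq2 : m ≤ q.len
          · exfalso
            rw [show Y.vert ⟨m, hm⟩ = q.vert ⟨m, by omega⟩ from
              Walk.append_vert_le q w hJ m hmq2] at heqv
            apply hyv
            rw [p.vert_congr (show i₀ = 0 + m by omega) hi₀ (by omega)]
            exact heqv
          · rw [show Y.vert ⟨m, hm⟩ = w.vert ⟨m - q.len, by omega⟩ from
              Walk.append_vert_ge q w hJ m (by omega) (by omega)] at heqv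
            by_cases hk : m - q.len = w.len
            · omega
            · exfalso
              have h2 : w.vert ⟨m - q.len, by omega⟩ = w.vert ⟨w.len, by omega⟩ :=
                heqv.trans hwtgt.symm
              obtain ⟨hk0, -⟩ := hws.2 (m - q.len) w.len (by omega) (by omega)
                (by omega) h2
              apply hyv
              exact hwsrc.symm.trans
                ((w.vert_congr hk0.symm (by omega) (by omega)).trans heqv)
      · intro m hm heq
        by_cases hmq : m < q.len
        · rw [show Y.edge ⟨m, hm⟩ = q.edge ⟨m, hmq⟩ from
            Walk.append_edge_lt q w hJ m hmq] at heq
          exact he_q (0 + m) (by omega) heq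
        · rw [show Y.edge ⟨m, hm⟩ = w.edge ⟨m - q.len, by omega⟩ from
            Walk.append_edge_ge q w hJ m (by omega) (by omega)] at heq
          exact heΩ' (by rw [← heq]; exact hwin.2 (m - q.len) (by omega))
  clear hqlen hqs hqcf hqsrc hqtgt he_q hqeΩ hfirst hmem hq
  obtain ⟨Y, hYs, hYcf, hYsrc, hYtgt, hYo, hYstart, hYvertu, hYvertv, hYnoe⟩ := hYex
  have hYpos : 0 < Y.len := hYo.pos
  have hYlast : ∀ hY : 0 < Y.len, c (Y.edge ⟨Y.len - 1, by omega⟩) v ≠ c e v := by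
    intro hY hc
    apply hnc
    refine ⟨e, Y.edge ⟨Y.len - 1, by omega⟩, fun h => hYnoe _ (by omega) h.symm,
      (hends v).2 (Or.inl rfl), ?_, rfl, hc⟩
    exact (Y.incs (Y.len - 1) (by omega) v).2
      (Or.inr (hYtgt.symm.trans (Y.vert_congr (by omega) (by omega) (by omega))))
  -- the single-edge walk along `e`
  set sgl := G.singleWalk e v u hends with hsgl
  have hsgllen : sgl.len = 1 := rfl
  have hsglo : sgl.IsOpen := hvu
  have hsgls : sgl.IsSimple :=
    ⟨fun i j hi hj _ => by omega, fun i j hi hj hij heq => ⟨by omega, by omega⟩⟩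
  have hsglcf : sgl.CuspFree c := Walk.cuspFree_of sgl
    (fun i h => absurd h (by omega)) (fun hcl _ => absurd hcl hsglo)
  have hJ2 : sgl.tgt = Y.src := hYsrc.symm
  -- the closed walk `v -e- u -Y- v`
  set W := sgl.append Y hJ2 with hW
  have hWlen : W.len = sgl.len + Y.len := rfl
  have hWcl : W.IsClosed :=
    ((Walk.append_src sgl Y hJ2).trans (show sgl.src = v from rfl)).trans
      (((Walk.append_tgt sgl Y hJ2).trans hYtgt).symm)
  have hWs : W.IsSimple := by
    refine Walk.append_isSimple hJ2 hsgls hYs hsglo hYo ?_ ?_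
    · intro m m' hm hm' heq
      by_cases hm0 : m = 0
      · subst hm0
        right
        exact ⟨rfl, hYvertv m' hm' heq.symm⟩
      · have hm1 : m = 1 := by omega
        subst hm1
        left
        exact ⟨hsgllen.symm, hYvertu m' hm' heq.symm⟩
    · intro m m' hm hm' heq
      exact hYnoe m' hm' heq.symm
  have hWcf : W.CuspFree c := by
    refine Walk.append_cuspFree hJ2 hsglcf hYcf ?_ (Or.inl ⟨by omega, hYpos⟩) ?_
    · intro h1 h2
      refine Or.inr (fun hcc => hYstart h2 (hcc.symm.trans ?_))
      show c e Y.src = c e u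
      rw [hYsrc]
    · intro hcl h1 h2
      exact Or.inr (fun hcc => hYlast h2 hcc)
  have hWcyc : W.IsCycle := ⟨hWs, hWcl, by omega⟩
  have hWmemu : W.MemV u :=
    ⟨1, by omega, (Walk.append_vert_le sgl Y hJ2 1 (by omega)).trans rfl⟩
  have hWtgtv : W.tgt = v := (Walk.append_tgt sgl Y hJ2).trans hYtgt
  -- the enlarged sub-graph
  set T := Ω.union W.toSub with hT
  have hmonoL : ∀ r : G.Walk, r.InSub Ω → r.InSub T := fun r hr =>
    ⟨fun i hi => Set.mem_union_left _ (hr.1 i hi), fun i hi => Set.mem_union_left _ (hr.2 i hi)⟩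
  have hmonoR : ∀ r : G.Walk, r.InSub W.toSub → r.InSub T := fun r hr =>
    ⟨fun i hi => Set.mem_union_right _ (hr.1 i hi),
     fun i hi => Set.mem_union_right _ (hr.2 i hi)⟩
  have hTcfcu : G.IsCuspFreeCycleUnion c T := by
    refine ⟨F ∪ {W}, ?_, ?_, ?_⟩
    · rintro ω'' (h | h)
      · exact hF ω'' h
      · rw [Set.mem_singleton_iff] at h
        subst h
        exact ⟨hWcyc, hWcf⟩
    · apply Set.ext
      intro t
      constructor
      · intro ht
        rcases (ht : t ∈ Ω.verts ∨ t ∈ W.toSub.verts) with ht | ht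
        · rw [hV] at ht
          obtain ⟨ω₁, h1, h2⟩ := ht
          exact ⟨ω₁, Or.inl h1, h2⟩
        · exact ⟨W, Or.inr rfl, ht⟩
      · rintro ⟨ω₁, h1 | h1, h2⟩
        · show t ∈ Ω.verts ∨ t ∈ W.toSub.verts
          left
          rw [hV]
          exact ⟨ω₁, h1, h2⟩
        · show t ∈ Ω.verts ∨ t ∈ W.toSub.verts
          right
          rw [Set.mem_singleton_iff] at h1
          subst h1
          exact h2
    · apply Set.ext
      intro t
      constructor
      · intro ht
        rcases (ht : t ∈ Ω.edges ∨ t ∈ W.toSub.edges) with ht | ht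
        · rw [hE] at ht
          obtain ⟨ω₁, h1, h2⟩ := ht
          exact ⟨ω₁, Or.inl h1, h2⟩
        · exact ⟨W, Or.inr rfl, ht⟩
      · rintro ⟨ω₁, h1 | h1, h2⟩
        · show t ∈ Ω.edges ∨ t ∈ W.toSub.edges
          left
          rw [hE]
          exact ⟨ω₁, h1, h2⟩
        · show t ∈ Ω.edges ∨ t ∈ W.toSub.edges
          right
          rw [Set.mem_singleton_iff] at h1
          subst h1
          exact h2
  have hTconn : T.IsConnected := by
    constructor
    · exact Or.inl ⟨v, Set.mem_union_left _ hv⟩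
    · have hto : ∀ t ∈ T.verts, ∃ pw : G.Walk, pw.InSub T ∧ pw.src = t ∧ pw.tgt = v := by
        intro t ht
        rcases (ht : t ∈ Ω.verts ∨ t ∈ W.toSub.verts) with ht | ht
        · obtain ⟨pw, hin, h1, h2⟩ := hconnΩ.2 t ht v hv
          exact ⟨pw, hmonoL pw hin, h1, h2⟩
        · obtain ⟨k, hk, hkt⟩ := (ht : W.MemV t)
          refine ⟨W.segment k W.len (by omega) (le_refl _),
            hmonoR _ (Walk.segment_inSub (Walk.inSub_self W) _ _ _ _),
            (Walk.segment_src W k W.len (by omega) (le_refl _)).trans hkt,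
            (Walk.segment_tgt W k W.len (by omega) (le_refl _)).trans hWtgtv⟩
      intro a ha b hb
      obtain ⟨pa, hain, hasrc, hatgt⟩ := hto a ha
      obtain ⟨pb, hbin, hbsrc, hbtgt⟩ := hto b hb
      have hJ3 : pa.tgt = pb.reverse.src :=
        hatgt.trans ((Walk.reverse_src pb).trans hbtgt).symm
      exact ⟨pa.append pb.reverse hJ3,
        Walk.append_inSub hJ3 hain (Walk.reverse_inSub hbin),
        (Walk.append_src pa pb.reverse hJ3).trans hasrc,
        (Walk.append_tgt pa pb.reverse hJ3).trans ((Walk.reverse_tgt pb).trans hbsrc)⟩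
  have hle : Ω.le T :=
    ⟨fun z hz => Set.mem_union_left _ hz, fun z hz => Set.mem_union_left _ hz⟩
  have hTle := hmax T hTcfcu hTconn hle
  exact hu (hTle.1 (Set.mem_union_right _ hWmemu))
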